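/- arXiv:2101.11411 — 4 statements merged into one kernel-verified Lean document; each statement's English description precedes it below -/
import Mathlib

section
/- Let M : ℕ → ℝ be a weight sequence in the class LC, with m_p := M_p/p!. Then the associated weight function ω_M is a normalized weight function (continuous, nondecreasing, ω_M(0) = 0, ω_M(t) → +∞ as t → +∞, and ω_M(t) = 0 for 0 ≤ t ≤ 1), it satisfies (ω3) (log(t) = o(ω_M(t)) as t → +∞) and (ω4) (t ↦ ω_M(e^t) is convex on ℝ). Moreover: if liminf_{p→∞} (m_p)^{1/p} > 0 then ω_M satisfies (ω2) (ω_M(t) = O(t) as t → +∞); if lim_{p→∞} (m_p)^{1/p} = +∞ then ω_M satisfies (ω5) (ω_M(t) = o(t) as t → +∞); and ω_M satisfies (ω6) (there exists H ≥ 1 with 2·ω_M(t) ≤ ω_M(H·t) + H for all t ≥ 0) if and only if M has moderate growth (mg). -/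
open Filter Real Asymptotics

/-- The associated weight function of a weight sequence `M`. -/
noncomputable def omegaM (M : ℕ → ℝ) (t : ℝ) : ℝ :=
  if t = 0 then 0 else ⨆ p : ℕ, Real.log (t ^ p / M p)

/-- The class `LC`: positive, normalized, log-convex weight sequences whose
`p`-th roots tend to infinity. -/
def IsLC (M : ℕ → ℝ) : Prop :=
  (∀ p, 0 < M p) ∧ M 0 = 1 ∧ M 0 ≤ M 1 ∧
  (∀ p : ℕ, 1 ≤ p → (M p) ^ 2 ≤ M (p - 1) * M (p + 1)) ∧
  Filter.Tendsto (fun p : ℕ => (M p) ^ (1 / (p : ℝ))) Filter.atTop Filter.atTop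

/-- The quotient sequence `μ_0 = 1`, `μ_p = M_p / M_{p-1}`. -/
noncomputable def mu (M : ℕ → ℝ) (p : ℕ) : ℝ :=
  if p = 0 then 1 else M p / M (p - 1)

/-- Moderate growth `(mg)`. -/
def HasMG (M : ℕ → ℝ) : Prop :=
  ∃ C : ℝ, 1 ≤ C ∧ ∀ p q : ℕ, M (p + q) ≤ C ^ (p + q) * M p * M q

/-- `m_p := M_p / p!`. -/
noncomputable def mseq (M : ℕ → ℝ) (p : ℕ) : ℝ := M p / (Nat.factorial p)

/-- Young conjugate of `x ↦ ω_M(eˣ)`. -/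
noncomputable def phiStar (M : ℕ → ℝ) (y : ℝ) : ℝ :=
  sSup ((fun x => x * y - omegaM M (Real.exp x)) '' Set.Ici (0 : ℝ))

/-- The weight matrix associated with `ω_M`: `M^{(l)}_p := exp((1/l)·φ*(l·p))`. -/
noncomputable def MMat (M : ℕ → ℝ) (l : ℝ) (p : ℕ) : ℝ :=
  Real.exp ((1 / l) * phiStar M (l * p))

/-- `m^{(l)}_p := M^{(l)}_p / p!`. -/
noncomputable def mMat (M : ℕ → ℝ) (l : ℝ) (p : ℕ) : ℝ :=
  MMat M l p / (Nat.factorial p)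

/-- The Roumieu root-almost-increasing condition `(M_{rai})` for the weight matrix
associated with `ω_M`. -/
def MRai (M : ℕ → ℝ) : Prop :=
  ∀ x : ℝ, 0 < x → ∃ C : ℝ, 0 < C ∧ ∃ y : ℝ, 0 < y ∧
    ∀ p q : ℕ, 1 ≤ p → p ≤ q →
      (mMat M x p) ^ (1 / (p : ℝ)) ≤ C * (mMat M y q) ^ (1 / (q : ℝ))

/-- `M ≼ N` : `sup_{p ≥ 1} (M_p/N_p)^{1/p} < ∞`. -/
def Precsim (M N : ℕ → ℝ) : Prop :=
  ∃ A : ℝ, ∀ p : ℕ, 1 ≤ p → (M p / N p) ^ (1 / (p : ℝ)) ≤ A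

/-- `M ≈ N` : mutual `≼`. -/
def Approx (M N : ℕ → ℝ) : Prop := Precsim M N ∧ Precsim N M

/-- Condition `(ω1)` for a weight function. -/
def Omega1 (w : ℝ → ℝ) : Prop :=
  ∃ L : ℝ, 1 ≤ L ∧ ∀ t : ℝ, 0 ≤ t → w (2 * t) ≤ L * (w t + 1)

/-- Condition `(α0)` (in the rewritten form valid for all `t ≥ 0`). -/
def Alpha0 (w : ℝ → ℝ) : Prop :=
  ∃ C : ℝ, 1 ≤ C ∧ ∃ D : ℝ, 1 ≤ D ∧ ∀ lam : ℝ, 1 ≤ lam → ∀ t : ℝ, 0 ≤ t →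
    w (lam * t) ≤ C * lam * w t + D * lam

/-!
Writing `t = eˣ`, `ω_M(eˣ) = sup_p (p x - log M_p)` is a supremum of affine functions of `x`,
finite since `log M_p / p → ∞`: this gives (ω4), and continuity. Log-convexity makes `log M_p` a
convex sequence with `log M_0 = 0 ≤ log M_1`, so `log M_p ≥ 0`, whence `ω_M = 0` on `[0, 1]`.

If `M_q ≥ c^q q!` for large `q`, then `t^q / M_q ≤ (t/c)^q / q! ≤ e^{t/c}`, so
`ω_M(t) ≤ t/c + O(log t)`: this gives (ω2) and (ω5).

(mg) gives `M_{2p} ≤ C^{2p} M_p²`, hence `2 ω_M(t) ≤ ω_M(C t)`. Conversely, by convexity of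
`log M_p` the supremum defining `ω_M(t)` is attained at `p = n` when `t = M_{n+1} / M_n`;
comparing with (ω6) at `t / H` and the terms `p`, `q` of `ω_M(t / H)` bounds `log M_{p+q}` by
`log M_p + log M_q + O(p + q)`.
-/

open scoped Nat

lemma pow_le_of_le_rpow_one_div {x y : ℝ} (hx : 0 ≤ x) (hy : 0 ≤ y) {p : ℕ} (hp : p ≠ 0)
    (h : x ≤ y ^ (1 / (p : ℝ))) : x ^ p ≤ y := by
  rw [one_div, Real.le_rpow_inv_iff_of_pos hx hy (by positivity)] at h
  exact_mod_cast h

lemma add_mul_le_of_monotone_sub {a : ℕ → ℝ} (ha : Monotone fun j => a (j + 1) - a j)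
    (n q : ℕ) : a n + ((q : ℝ) - n) * (a (n + 1) - a n) ≤ a q := by
  rcases le_total n q with hnq | hqn
  · induction q, hnq using Nat.le_induction with
    | base => simp
    | succ q hnq ih =>
      have := ha hnq
      push_cast
      linarith
  · induction hqn using Nat.decreasingInduction with
    | self => simp
    | of_succ q hqn ih =>
      have := ha hqn.le
      push_cast at ih
      linarith

lemma omegaM_zero (M : ℕ → ℝ) : omegaM M 0 = 0 := if_pos rfl

namespace IsLC

variable {M : ℕ → ℝ}

lemma pos (hM : IsLC M) (p : ℕ) : 0 < M p := hM.1 p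

lemma apply_zero (hM : IsLC M) : M 0 = 1 := hM.2.1

lemma monotone_log_sub (hM : IsLC M) : Monotone fun j => log (M (j + 1)) - log (M j) := by
  refine monotone_nat_of_le_succ fun j => ?_
  have h := hM.2.2.2.1 (j + 1) (by omega)
  rw [Nat.add_sub_cancel] at h
  have := Real.log_le_log (pow_pos (hM.pos _) 2) h
  rw [Real.log_pow, Real.log_mul (hM.pos _).ne' (hM.pos _).ne'] at this
  push_cast at this
  linarith

lemma log_nonneg (hM : IsLC M) (p : ℕ) : 0 ≤ log (M p) := by
  have h1 : 0 ≤ log (M 1) := Real.log_nonneg (hM.apply_zero ▸ hM.2.2.1)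
  have := add_mul_le_of_monotone_sub (a := fun j => log (M j)) hM.monotone_log_sub 0 p
  simp only [hM.apply_zero, Real.log_one, CharP.cast_eq_zero, sub_zero, zero_add] at this
  exact (mul_nonneg (Nat.cast_nonneg p) h1).trans this

lemma bddAbove_range (hM : IsLC M) (x : ℝ) :
    BddAbove (Set.range fun p : ℕ => p * x - log (M p)) := by
  refine (isBoundedUnder_of_eventually_le (a := 0) ?_).bddAbove_range
  filter_upwards [hM.2.2.2.2.eventually_ge_atTop (exp x), eventually_ne_atTop 0] with p hp hp0
  have := Real.log_le_log (by positivity)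
    (pow_le_of_le_rpow_one_div (exp_pos x).le (hM.pos p).le hp0 hp)
  rw [Real.log_pow, Real.log_exp] at this
  linarith

lemma omegaM_of_pos (hM : IsLC M) {t : ℝ} (ht : 0 < t) :
    omegaM M t = ⨆ p : ℕ, p * log t - log (M p) := by
  rw [omegaM, if_neg ht.ne']
  congr 1
  funext p
  rw [Real.log_div (pow_ne_zero _ ht.ne') (hM.pos p).ne', Real.log_pow]

lemma le_omegaM (hM : IsLC M) {t : ℝ} (ht : 0 < t) (p : ℕ) :
    p * log t - log (M p) ≤ omegaM M t := by
  rw [hM.omegaM_of_pos ht]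
  exact le_ciSup (hM.bddAbove_range _) p

lemma omegaM_le (hM : IsLC M) {t a : ℝ} (ht : 0 < t)
    (h : ∀ p : ℕ, p * log t - log (M p) ≤ a) : omegaM M t ≤ a := by
  rw [hM.omegaM_of_pos ht]
  exact ciSup_le h

lemma omegaM_nonneg (hM : IsLC M) {t : ℝ} (ht : 0 ≤ t) : 0 ≤ omegaM M t := by
  rcases ht.eq_or_lt with rfl | ht
  · rw [omegaM_zero]
  · simpa [hM.apply_zero] using hM.le_omegaM ht 0

lemma omegaM_eq_zero (hM : IsLC M) {t : ℝ} (ht₀ : 0 ≤ t) (ht₁ : t ≤ 1) : omegaM M t = 0 := by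
  rcases ht₀.eq_or_lt with rfl | ht
  · exact omegaM_zero M
  refine le_antisymm (hM.omegaM_le ht fun p => ?_) (hM.omegaM_nonneg ht₀)
  have := mul_nonpos_of_nonneg_of_nonpos (Nat.cast_nonneg p) (Real.log_nonpos ht.le ht₁)
  linarith [hM.log_nonneg p]

lemma monotoneOn_omegaM (hM : IsLC M) : MonotoneOn (omegaM M) (Set.Ici 0) := by
  intro s hs t ht hst
  rcases (Set.mem_Ici.mp hs).eq_or_lt with rfl | hs
  · rw [omegaM_zero]
    exact hM.omegaM_nonneg ht
  refine hM.omegaM_le hs fun p => le_trans ?_ (hM.le_omegaM (hs.trans_le hst) p)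
  gcongr

lemma tendsto_omegaM_atTop (hM : IsLC M) : Tendsto (omegaM M) atTop atTop := by
  refine tendsto_atTop_mono' atTop ?_
    (tendsto_atTop_add_const_right atTop (-log (M 1)) tendsto_log_atTop)
  filter_upwards [eventually_gt_atTop 0] with t ht
  have := hM.le_omegaM ht 1
  push_cast at this
  linarith

lemma convexOn_omegaM_exp (hM : IsLC M) : ConvexOn ℝ Set.univ fun x => omegaM M (exp x) := by
  refine ⟨convex_univ, fun x _ y _ a b ha hb hab => ?_⟩
  simp only [hM.omegaM_of_pos (exp_pos _), log_exp, smul_eq_mul]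
  refine ciSup_le fun p => ?_
  have hx := le_ciSup (hM.bddAbove_range x) p
  have hy := le_ciSup (hM.bddAbove_range y) p
  calc (p : ℝ) * (a * x + b * y) - log (M p)
      = a * (p * x - log (M p)) + b * (p * y - log (M p)) := by
        linear_combination log (M p) * hab
    _ ≤ _ := by gcongr

lemma continuousOn_omegaM (hM : IsLC M) : ContinuousOn (omegaM M) (Set.Ici 0) := by
  have hexp := hM.convexOn_omegaM_exp.locallyLipschitz.continuous
  intro t ht
  rcases (Set.mem_Ici.mp ht).eq_or_lt with rfl | ht
  · refine continuousWithinAt_const.congr_of_eventuallyEq ?_ (omegaM_zero M)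
    filter_upwards [self_mem_nhdsWithin, mem_nhdsWithin_of_mem_nhds (Iio_mem_nhds one_pos)]
      with s hs hs₁
    exact hM.omegaM_eq_zero hs hs₁.le
  · refine ((hexp.continuousAt.comp (continuousAt_log ht.ne')).congr ?_).continuousWithinAt
    filter_upwards [Ioi_mem_nhds ht] with s hs
    simp [exp_log hs]

lemma isLittleO_log_omegaM (hM : IsLC M) : (fun t => log t) =o[atTop] omegaM M := by
  refine isLittleO_iff.2 fun c hc => ?_
  obtain ⟨p, hp⟩ := exists_nat_ge (2 / c)
  have hp₀ : (0 : ℝ) < p := (by positivity : (0 : ℝ) < 2 / c).trans_le hp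
  have hcp : 2 ≤ c * p := by rwa [div_le_iff₀' hc] at hp
  filter_upwards [hM.tendsto_omegaM_atTop.eventually_ge_atTop (log (M p)),
    eventually_ge_atTop 1] with t hωt ht
  have hω := hM.omegaM_nonneg (zero_le_one.trans ht)
  rw [norm_of_nonneg (Real.log_nonneg ht), norm_of_nonneg hω]
  have hterm := hM.le_omegaM (one_pos.trans_le ht) p
  have : p * log t ≤ p * (c * omegaM M t) := by nlinarith
  exact le_of_mul_le_mul_left this hp₀

lemma exists_omegaM_le_of_le_mseq_root (hM : IsLC M) {c : ℝ} (hc : 0 < c)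
    (h : ∀ᶠ q in atTop, c ≤ mseq M q ^ (1 / (q : ℝ))) :
    ∃ N : ℕ, ∀ t, 1 ≤ t → omegaM M t ≤ c⁻¹ * t + N * log t := by
  obtain ⟨N, hN⟩ := eventually_atTop.1 (h.and (eventually_ne_atTop 0))
  refine ⟨N, fun t ht => hM.omegaM_le (one_pos.trans_le ht) fun q => ?_⟩
  have hlog := Real.log_nonneg ht
  rcases le_or_gt N q with hq | hq
  · have hcq : c ^ q * q ! ≤ M q := by
      have := pow_le_of_le_rpow_one_div hc.le (by unfold mseq; positivity [hM.pos q])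
        (hN q hq).2 (hN q hq).1
      rwa [mseq, le_div_iff₀ (by positivity)] at this
    have hle : t ^ q / M q ≤ exp (c⁻¹ * t) := calc
      t ^ q / M q ≤ t ^ q / (c ^ q * q !) := by gcongr
      _ = (c⁻¹ * t) ^ q / q ! := by rw [mul_pow, inv_pow]; field_simp
      _ ≤ exp (c⁻¹ * t) := Real.pow_div_factorial_le_exp _ (by positivity) q
    have := Real.log_le_log (div_pos (by positivity) (hM.pos q)) hle
    rw [Real.log_div (by positivity) (hM.pos q).ne', Real.log_pow, Real.log_exp] at this
    have : 0 ≤ N * log t := by positivity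
    linarith
  · have : (q : ℝ) * log t ≤ N * log t := by gcongr
    have : 0 ≤ c⁻¹ * t := by positivity
    linarith [hM.log_nonneg q]

lemma isBigO_omegaM_id (hM : IsLC M)
    (h : 0 < liminf (fun p : ℕ => mseq M p ^ (1 / (p : ℝ))) atTop) :
    omegaM M =O[atTop] fun t => t := by
  set L := liminf (fun p : ℕ => mseq M p ^ (1 / (p : ℝ))) atTop
  have hbdd : IsBoundedUnder (· ≥ ·) atTop fun p : ℕ => mseq M p ^ (1 / (p : ℝ)) :=
    isBoundedUnder_of ⟨0, fun p => by unfold mseq; positivity [hM.pos p]⟩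
  obtain ⟨N, hN⟩ := hM.exists_omegaM_le_of_le_mseq_root (half_pos h)
    ((eventually_lt_of_lt_liminf (half_lt_self h) hbdd).mono fun _ => le_of_lt)
  have hbound : omegaM M =O[atTop] fun t => (L / 2)⁻¹ * t + N * log t := IsBigO.of_bound' <| by
    filter_upwards [eventually_ge_atTop 1] with t ht
    rw [norm_of_nonneg (hM.omegaM_nonneg (zero_le_one.trans ht))]
    exact (hN t ht).trans (le_abs_self _)
  exact hbound.trans (((isBigO_refl _ _).const_mul_left _).add
    (isLittleO_log_id_atTop.isBigO.const_mul_left _))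

lemma isLittleO_omegaM_id (hM : IsLC M)
    (h : Tendsto (fun p : ℕ => mseq M p ^ (1 / (p : ℝ))) atTop atTop) :
    omegaM M =o[atTop] fun t => t := by
  refine isLittleO_iff.2 fun ε hε => ?_
  obtain ⟨N, hN⟩ := hM.exists_omegaM_le_of_le_mseq_root (c := 2 / ε) (by positivity)
    (h.eventually_ge_atTop _)
  filter_upwards [eventually_ge_atTop 1,
    (isLittleO_log_id_atTop.const_mul_left (N : ℝ)).def (half_pos hε)] with t ht hlog
  have ht₀ : 0 ≤ t := zero_le_one.trans ht
  rw [norm_of_nonneg (hM.omegaM_nonneg ht₀), norm_of_nonneg ht₀]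
  rw [norm_of_nonneg (by positivity [Real.log_nonneg ht]), id, norm_of_nonneg ht₀] at hlog
  have := hN t ht
  rw [inv_div] at this
  linarith

lemma omegaM_exp_log_ratio_le (hM : IsLC M) (n : ℕ) :
    omegaM M (exp (log (M (n + 1)) - log (M n))) ≤
      n * (log (M (n + 1)) - log (M n)) - log (M n) := by
  refine hM.omegaM_le (exp_pos _) fun q => ?_
  have := add_mul_le_of_monotone_sub (a := fun j => log (M j)) hM.monotone_log_sub n q
  rw [log_exp]
  linarith

lemma hasMG_of_two_mul_omegaM_le (hM : IsLC M) {H : ℝ} (hH : 1 ≤ H)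
    (h : ∀ t : ℝ, 0 ≤ t → 2 * omegaM M t ≤ omegaM M (H * t) + H) : HasMG M := by
  have hH₀ : 0 < H := one_pos.trans_le hH
  refine ⟨H * exp H, by nlinarith [one_le_exp hH₀.le], fun p q => ?_⟩
  rcases Nat.eq_zero_or_pos (p + q) with hpq | hpq
  · obtain ⟨rfl, rfl⟩ : p = 0 ∧ q = 0 := by omega
    simp [hM.apply_zero]
  set x := log (M (p + q + 1)) - log (M (p + q))
  have hs : 0 < exp x / H := by positivity
  have hlogs : log (exp x / H) = x - log H := by rw [log_div (exp_ne_zero _) hH₀.ne', log_exp]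
  have h6 := h _ hs.le
  rw [mul_div_cancel₀ _ hH₀.ne'] at h6
  have hp := hM.le_omegaM hs p
  have hq := hM.le_omegaM hs q
  have hattained := hM.omegaM_exp_log_ratio_le (p + q)
  have hnH : H ≤ ((p + q : ℕ) : ℝ) * H := le_mul_of_one_le_left hH₀.le (by exact_mod_cast hpq)
  have key : log (M (p + q)) ≤ ((p + q : ℕ) : ℝ) * log (H * exp H) + log (M p) + log (M q) := by
    rw [log_mul hH₀.ne' (exp_ne_zero H), log_exp]
    rw [hlogs] at hp hq
    push_cast at hattained hnH ⊢
    linarith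
  calc M (p + q) = exp (log (M (p + q))) := (exp_log (hM.pos _)).symm
    _ ≤ exp (((p + q : ℕ) : ℝ) * log (H * exp H) + log (M p) + log (M q)) := exp_le_exp.2 key
    _ = (H * exp H) ^ (p + q) * M p * M q := by
      rw [exp_add, exp_add, exp_nat_mul, exp_log (by positivity), exp_log (hM.pos p),
        exp_log (hM.pos q)]

lemma two_mul_omegaM_le_of_hasMG (hM : IsLC M) {C : ℝ} (hC : 0 < C)
    (hmg : ∀ p q : ℕ, M (p + q) ≤ C ^ (p + q) * M p * M q) {t : ℝ} (ht : 0 ≤ t) :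
    2 * omegaM M t ≤ omegaM M (C * t) := by
  rcases ht.eq_or_lt with rfl | ht
  · simp [omegaM_zero]
  suffices ∀ p : ℕ, p * log t - log (M p) ≤ omegaM M (C * t) / 2 by
    linarith [hM.omegaM_le ht this]
  intro p
  have hmg' := Real.log_le_log (hM.pos _) (hmg p p)
  rw [log_mul (by positivity [hM.pos p]) (hM.pos p).ne', log_mul (by positivity) (hM.pos p).ne',
    log_pow] at hmg'
  have := hM.le_omegaM (mul_pos hC ht) (p + p)
  rw [log_mul hC.ne' ht.ne'] at this
  push_cast at this hmg'
  linarith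

end IsLC

/-- Lemma 2.3: basic properties of the associated weight function `ω_M`. -/
theorem stmt3 (M : ℕ → ℝ) (hM : IsLC M) :
    ContinuousOn (omegaM M) (Set.Ici (0 : ℝ)) ∧
    MonotoneOn (omegaM M) (Set.Ici (0 : ℝ)) ∧
    omegaM M 0 = 0 ∧
    Filter.Tendsto (omegaM M) Filter.atTop Filter.atTop ∧
    (∀ t : ℝ, 0 ≤ t → t ≤ 1 → omegaM M t = 0) ∧
    ((fun t : ℝ => Real.log t) =o[Filter.atTop] omegaM M) ∧
    ConvexOn ℝ Set.univ (fun x : ℝ => omegaM M (Real.exp x)) ∧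
    ((0 < Filter.liminf (fun p : ℕ => (mseq M p) ^ (1 / (p : ℝ))) Filter.atTop) →
      omegaM M =O[Filter.atTop] (fun t : ℝ => t)) ∧
    (Filter.Tendsto (fun p : ℕ => (mseq M p) ^ (1 / (p : ℝ))) Filter.atTop Filter.atTop →
      omegaM M =o[Filter.atTop] (fun t : ℝ => t)) ∧
    ((∃ H : ℝ, 1 ≤ H ∧ ∀ t : ℝ, 0 ≤ t →
        2 * omegaM M t ≤ omegaM M (H * t) + H) ↔ HasMG M) := by
  refine ⟨hM.continuousOn_omegaM, hM.monotoneOn_omegaM, omegaM_zero M, hM.tendsto_omegaM_atTop,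
    fun _ ht₀ ht₁ => hM.omegaM_eq_zero ht₀ ht₁, hM.isLittleO_log_omegaM, hM.convexOn_omegaM_exp,
    hM.isBigO_omegaM_id, hM.isLittleO_omegaM_id,
    ⟨fun ⟨H, hH, h⟩ => hM.hasMG_of_two_mul_omegaM_le hH h, fun ⟨C, hC, hmg⟩ => ⟨C, hC, ?_⟩⟩⟩
  intro t ht
  have := hM.two_mul_omegaM_le_of_hasMG (one_pos.trans_le hC) hmg ht
  linarith
end

section
/- There exists a weight sequence M : ℕ → ℝ in the class LC, with quotients μ_p, such that liminf_{p→∞} (M_{2p})^{1/(2p)} / (M_p)^{1/p} ≥ 2 > 1 (hence the associated weight function ω_M satisfies (ω1)), while for every integer Q ≥ 2 one has liminf_{p→∞} μ_{Q·p}/μ_p = 1, i.e. condition (β3) fails for M. -/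
open Filter Real Asymptotics

/-!
Take `M_p = 2^{E_p}` with `E_p = s_1 + ⋯ + s_p` and `s_j = 4^{k+2}` on the block
`2^{k²} ≤ j < 2^{(k+1)²}`. Then `μ_p = 2^{s_p}` is nondecreasing, so `M ∈ LC`. The blocks get
multiplicatively longer, so for `k ≥ Q` both `p = 2^{k²}` and `Qp` lie in block `k`: `μ_{Qp} = μ_p`
infinitely often, and (β3) fails.

Below the block `k` of `p + 1` lie the indices `j < 2^{k²}`, where `s_j ≤ s_{p+1} / 4`. They
form roughly a `4^{-k}` fraction of `[1, p]`, which against `s_{p+1} = 4^{k+2}` is just enough for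
`E_{2p} ≥ E_p + p s_{p+1} ≥ 2E_p + 2p`, i.e. `M_{2p} ≥ 4^p M_p²`. This gives the lower bound `2`
for the liminf of `M_{2p}^{1/2p} / M_p^{1/p}`, and (ω1) by splitting the supremum defining
`ω_M(2t)` into even and odd indices. The liminf is finite since for `2p = 2^{k²+2k}` the whole interval
`[2^{k²}, 2p]` lies in block `k`, whence `E_{2p} ≤ 2E_p + 32p`.
-/

open Finset

lemma liminf_eq_of_frequently_eq {f : ℕ → ℝ} {a : ℝ} (hle : ∀ᶠ p in atTop, a ≤ f p)
    (heq : ∃ᶠ p in atTop, f p = a) : liminf f atTop = a :=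
  le_antisymm
    (liminf_le_of_frequently_le (heq.mono fun _ h => h.le) (isBoundedUnder_of_eventually_ge hle))
    (le_liminf_of_le (IsCoboundedUnder.of_frequently_le (heq.mono fun _ h => h.le)) hle)

noncomputable def rootRatio (M : ℕ → ℝ) (p : ℕ) : ℝ :=
  M (2 * p) ^ (1 / (2 * (p : ℝ))) / M p ^ (1 / (p : ℝ))

section RootRatio

variable {M : ℕ → ℝ}

lemma rootRatio_eq (hM : ∀ p, 0 < M p) {p : ℕ} (hp : p ≠ 0) :
    rootRatio M p = (M (2 * p) / M p ^ 2) ^ ((2 * p : ℕ) : ℝ)⁻¹ := by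
  have hsq : M p ^ (1 / (p : ℝ)) = (M p ^ 2) ^ ((2 * p : ℕ) : ℝ)⁻¹ := by
    rw [← Real.rpow_natCast, ← Real.rpow_mul (hM p).le]
    congr 1
    push_cast
    field_simp
  rw [rootRatio, hsq, Real.div_rpow (hM _).le (by positivity)]
  push_cast
  rw [one_div]

lemma le_rootRatio_iff (hM : ∀ p, 0 < M p) {p : ℕ} (hp : p ≠ 0) {c : ℝ} (hc : 0 ≤ c) :
    c ≤ rootRatio M p ↔ c ^ (2 * p) * M p ^ 2 ≤ M (2 * p) := by
  have hp' : (0 : ℝ) < (2 * p : ℕ) := by positivity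
  rw [rootRatio_eq hM hp, Real.le_rpow_inv_iff_of_pos hc (div_pos (hM _) (pow_pos (hM p) 2)).le hp',
    Real.rpow_natCast, le_div_iff₀ (pow_pos (hM p) 2)]

lemma rootRatio_le_iff (hM : ∀ p, 0 < M p) {p : ℕ} (hp : p ≠ 0) {C : ℝ} (hC : 0 ≤ C) :
    rootRatio M p ≤ C ↔ M (2 * p) ≤ C ^ (2 * p) * M p ^ 2 := by
  have hp' : (0 : ℝ) < (2 * p : ℕ) := by positivity
  rw [rootRatio_eq hM hp, Real.rpow_inv_le_iff_of_pos (div_pos (hM _) (pow_pos (hM p) 2)).le hC hp',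
    Real.rpow_natCast, div_le_iff₀ (pow_pos (hM p) 2)]

lemma le_liminf_rootRatio (hM : ∀ p, 0 < M p) {c C : ℝ} (hc : 0 ≤ c) (hC : 0 ≤ C)
    (hlow : ∀ p, c ^ (2 * p) * M p ^ 2 ≤ M (2 * p))
    (hup : ∃ᶠ p in atTop, M (2 * p) ≤ C ^ (2 * p) * M p ^ 2) :
    c ≤ liminf (rootRatio M) atTop := by
  refine le_liminf_of_le (IsCoboundedUnder.of_frequently_le (a := C) ?_) ?_
  · exact (hup.and_eventually (eventually_ne_atTop 0)).mono fun p ⟨h, hp⟩ =>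
      (rootRatio_le_iff hM hp hC).2 h
  · filter_upwards [eventually_ne_atTop 0] with p hp using (le_rootRatio_iff hM hp hc).2 (hlow p)

end RootRatio

section WeightFunction

variable {M : ℕ → ℝ} (hM : ∀ p, 0 < M p)
  (hroot : Tendsto (fun p : ℕ => M p ^ (1 / (p : ℝ))) atTop atTop)
include hM hroot

lemma bddAbove_range_log_div {t : ℝ} (ht : 0 < t) :
    BddAbove (Set.range fun p => log (t ^ p / M p)) := by
  refine IsBoundedUnder.bddAbove_range (isBoundedUnder_of_eventually_le (a := 0) ?_)
  filter_upwards [hroot.eventually_ge_atTop t, eventually_gt_atTop 0] with p hp hp0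
  rw [one_div, Real.le_rpow_inv_iff_of_pos ht.le (hM p).le (by positivity), Real.rpow_natCast] at hp
  exact log_nonpos (div_nonneg (by positivity) (hM p).le) ((div_le_one (hM p)).2 hp)

lemma log_div_le_omegaM {t : ℝ} (ht : 0 < t) (p : ℕ) : log (t ^ p / M p) ≤ omegaM M t := by
  rw [omegaM, if_neg ht.ne']
  exact le_ciSup (bddAbove_range_log_div hM hroot ht) p

lemma omegaM_nonneg (h0 : M 0 = 1) {t : ℝ} (ht : 0 ≤ t) : 0 ≤ omegaM M t := by
  rcases ht.eq_or_lt with rfl | ht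
  · simp [omegaM]
  · simpa [h0] using log_div_le_omegaM hM hroot ht 0

lemma log_le_omegaM_add {t : ℝ} (ht : 0 < t) : log t ≤ omegaM M t + log (M 1) := by
  have := log_div_le_omegaM hM hroot ht 1
  rw [pow_one, log_div ht.ne' (hM 1).ne'] at this
  linarith

variable (hdouble : ∀ p, 2 ^ (2 * p) * M p ^ 2 ≤ M (2 * p))
include hdouble

lemma log_div_two_mul_le_omegaM {t : ℝ} (ht : 0 < t) (q : ℕ) :
    log ((2 * t) ^ (2 * q) / M (2 * q)) ≤ 2 * omegaM M t := by
  have hle : (2 * t) ^ (2 * q) / M (2 * q) ≤ (t ^ q / M q) ^ 2 := by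
    calc (2 * t) ^ (2 * q) / M (2 * q) ≤ (2 * t) ^ (2 * q) / (2 ^ (2 * q) * M q ^ 2) :=
          div_le_div_of_nonneg_left (by positivity) (by have := hM q; positivity) (hdouble q)
      _ = (t ^ q / M q) ^ 2 := by
          rw [mul_pow, div_pow, mul_div_mul_left _ _ (by positivity), ← pow_mul, mul_comm 2 q]
  calc log ((2 * t) ^ (2 * q) / M (2 * q)) ≤ log ((t ^ q / M q) ^ 2) :=
        log_le_log (div_pos (by positivity) (hM _)) hle
    _ = 2 * log (t ^ q / M q) := by rw [log_pow]; norm_num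
    _ ≤ 2 * omegaM M t := by linarith [log_div_le_omegaM hM hroot ht q]

lemma omegaM_two_mul_le (h0 : M 0 = 1) (hmono : Monotone M) {t : ℝ} (ht : 0 < t) :
    omegaM M (2 * t) ≤ 3 * omegaM M t + log (2 * M 1) := by
  have h2t : 0 < 2 * t := by positivity
  have hω := omegaM_nonneg hM hroot h0 ht.le
  rw [omegaM, if_neg h2t.ne']
  refine ciSup_le fun p => ?_
  rw [log_mul two_ne_zero (hM 1).ne']
  obtain ⟨q, rfl | rfl⟩ := Nat.even_or_odd' p
  · have := log_div_two_mul_le_omegaM hM hroot hdouble ht q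
    have : 0 ≤ log 2 + log (M 1) := by
      rw [← log_mul two_ne_zero (hM 1).ne']
      exact log_nonneg (by linarith [h0 ▸ hmono (Nat.zero_le 1)])
    linarith
  · have hodd : (2 * t) ^ (2 * q + 1) / M (2 * q + 1) ≤
        2 * t * ((2 * t) ^ (2 * q) / M (2 * q)) := by
      rw [pow_succ, mul_comm _ (2 * t), mul_div_assoc]
      gcongr
      exacts [hM _, hmono (Nat.le_succ _)]
    calc log ((2 * t) ^ (2 * q + 1) / M (2 * q + 1))
        ≤ log (2 * t * ((2 * t) ^ (2 * q) / M (2 * q))) :=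
          log_le_log (div_pos (by positivity) (hM _)) hodd
      _ = log 2 + log t + log ((2 * t) ^ (2 * q) / M (2 * q)) := by
          rw [log_mul (by positivity) (div_pos (by positivity) (hM _)).ne',
            log_mul two_ne_zero ht.ne']
      _ ≤ 3 * omegaM M t + (log 2 + log (M 1)) := by
          linarith [log_le_omegaM_add hM hroot ht, log_div_two_mul_le_omegaM hM hroot hdouble ht q]

lemma omega1_omegaM (h0 : M 0 = 1) (hmono : Monotone M) : Omega1 (omegaM M) := by
  have hM1 : 0 ≤ log (2 * M 1) := log_nonneg (by linarith [h0 ▸ hmono (Nat.zero_le 1)])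
  refine ⟨3 + log (2 * M 1), by linarith, fun t ht => ?_⟩
  rcases ht.eq_or_lt with rfl | ht
  · simp only [mul_zero, omegaM, if_pos]
    linarith
  · have hω := omegaM_nonneg hM hroot h0 ht.le
    nlinarith [omegaM_two_mul_le hM hroot hdouble h0 hmono ht, mul_nonneg hM1 hω]

end WeightFunction

def expSum (s : ℕ → ℕ) (p : ℕ) : ℕ := ∑ i ∈ range p, s (i + 1)

namespace expSum

variable {s : ℕ → ℕ}

@[simp] lemma zero : expSum s 0 = 0 := rfl

lemma succ (p : ℕ) : expSum s (p + 1) = expSum s p + s (p + 1) :=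
  sum_range_succ _ _

lemma add (m n : ℕ) : expSum s (m + n) = expSum s m + ∑ i ∈ range n, s (m + i + 1) := by
  simpa only [expSum, add_assoc] using sum_range_add (fun i => s (i + 1)) m n

lemma monotone : Monotone (expSum s) := fun _ _ h =>
  sum_le_sum_of_subset (range_subset_range.2 h)

variable (hs : Monotone s)
include hs

lemma add_le (m n : ℕ) : expSum s (m + n) ≤ expSum s m + n * s (m + n) := by
  rw [add]
  gcongr
  simpa using sum_le_card_nsmul (range n) _ _ fun i hi =>
    hs (show m + i + 1 ≤ m + n by simp at hi; omega)

lemma le_add (m n : ℕ) : expSum s m + n * s (m + 1) ≤ expSum s (m + n) := by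
  rw [add]
  gcongr
  simpa using card_nsmul_le_sum (range n) _ _ fun i _ => hs (by omega : m + 1 ≤ m + i + 1)

lemma le_mul (p : ℕ) : expSum s p ≤ p * s p := by
  simpa using add_le hs 0 p

lemma add_mul_le_two_mul (p : ℕ) : expSum s p + p * s (p + 1) ≤ expSum s (2 * p) := by
  simpa [two_mul] using le_add hs p p

lemma two_mul_le {m p : ℕ} (hm : m ≤ p) (h : s (m + 1) = s (2 * p)) :
    expSum s (2 * p) ≤ 2 * expSum s p + m * s (2 * p) := by
  have hup := add_le hs p p
  have hlow := le_add hs m (p - m)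
  rw [Nat.add_sub_cancel' hm, h] at hlow
  rw [← two_mul] at hup
  have : p * s (2 * p) = (p - m) * s (2 * p) + m * s (2 * p) := by
    rw [← add_mul, Nat.sub_add_cancel hm]
  omega

lemma eventually_mul_le (hunb : ∀ n, ∃ j, n ≤ s j) (n : ℕ) :
    ∀ᶠ p in atTop, n * p ≤ expSum s p := by
  obtain ⟨j, hj⟩ := hunb (2 * n)
  filter_upwards [eventually_ge_atTop (2 * j)] with p hp
  have h := expSum.le_add hs j (p - j)
  rw [Nat.add_sub_cancel' (by omega)] at h
  calc n * p ≤ n * (2 * (p - j)) := Nat.mul_le_mul_left _ (by omega)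
    _ = (p - j) * (2 * n) := by ring
    _ ≤ (p - j) * s (j + 1) := Nat.mul_le_mul_left _ (hj.trans (hs j.le_succ))
    _ ≤ expSum s p := le_of_add_le_right h

end expSum

noncomputable def twoPowSeq (s : ℕ → ℕ) (p : ℕ) : ℝ := 2 ^ expSum s p

namespace twoPowSeq

variable {s : ℕ → ℕ}

lemma pos (p : ℕ) : 0 < twoPowSeq s p := by
  unfold twoPowSeq; positivity

lemma monotone : Monotone (twoPowSeq s) := fun _ _ h =>
  pow_le_pow_right₀ one_le_two (expSum.monotone h)

lemma mu_eq {p : ℕ} (hp : p ≠ 0) : mu (twoPowSeq s) p = 2 ^ s p := by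
  obtain ⟨p, rfl⟩ := Nat.exists_eq_succ_of_ne_zero hp
  rw [mu, if_neg hp, twoPowSeq, twoPowSeq, Nat.succ_sub_one, expSum.succ, pow_add,
    mul_div_cancel_left₀ _ (by positivity)]

lemma rpow_inv (p : ℕ) : twoPowSeq s p ^ (1 / (p : ℝ)) = 2 ^ ((expSum s p : ℝ) / p) := by
  rw [twoPowSeq, ← Real.rpow_natCast, ← Real.rpow_mul zero_le_two, mul_one_div]

lemma tendsto_rpow_inv (hs : Monotone s) (hunb : ∀ n, ∃ j, n ≤ s j) :
    Tendsto (fun p : ℕ => twoPowSeq s p ^ (1 / (p : ℝ))) atTop atTop := by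
  simp_rw [rpow_inv]
  refine (tendsto_rpow_atTop_of_base_gt_one 2 one_lt_two).comp (tendsto_atTop.2 fun b => ?_)
  obtain ⟨n, hn⟩ := exists_nat_ge b
  filter_upwards [expSum.eventually_mul_le hs hunb n, eventually_gt_atTop 0] with p hp hp0
  rw [le_div_iff₀ (by positivity)]
  calc b * p ≤ n * p := by gcongr
    _ ≤ expSum s p := by exact_mod_cast hp

lemma isLC (hs : Monotone s) (hunb : ∀ n, ∃ j, n ≤ s j) : IsLC (twoPowSeq s) := by
  refine ⟨pos, by simp [twoPowSeq], monotone (Nat.zero_le 1), fun p hp => ?_,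
    tendsto_rpow_inv hs hunb⟩
  obtain ⟨p, rfl⟩ := Nat.exists_eq_add_of_le' hp
  simp only [twoPowSeq, Nat.add_sub_cancel, ← pow_mul, ← pow_add]
  refine pow_le_pow_right₀ one_le_two ?_
  rw [expSum.succ (p + 1), expSum.succ p]
  have := hs (Nat.le_add_right (p + 1) 1)
  omega

lemma pow_mul_sq (c p : ℕ) :
    ((2 : ℝ) ^ c) ^ (2 * p) * twoPowSeq s p ^ 2 = 2 ^ (2 * expSum s p + 2 * c * p) := by
  rw [twoPowSeq, ← pow_mul, ← pow_mul, ← pow_add]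
  ring_nf

lemma pow_mul_sq_le {c p : ℕ} (h : 2 * expSum s p + 2 * c * p ≤ expSum s (2 * p)) :
    ((2 : ℝ) ^ c) ^ (2 * p) * twoPowSeq s p ^ 2 ≤ twoPowSeq s (2 * p) := by
  rw [pow_mul_sq]
  exact pow_le_pow_right₀ one_le_two h

lemma le_pow_mul_sq {c p : ℕ} (h : expSum s (2 * p) ≤ 2 * expSum s p + 2 * c * p) :
    twoPowSeq s (2 * p) ≤ ((2 : ℝ) ^ c) ^ (2 * p) * twoPowSeq s p ^ 2 := by
  rw [pow_mul_sq]
  exact pow_le_pow_right₀ one_le_two h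

lemma one_le_mu_mul_div (hs : Monotone s) {Q : ℕ} (hQ : Q ≠ 0) (p : ℕ) :
    1 ≤ mu (twoPowSeq s) (Q * p) / mu (twoPowSeq s) p := by
  rcases eq_or_ne p 0 with rfl | hp
  · simp [mu]
  · rw [mu_eq hp, mu_eq (mul_ne_zero hQ hp), one_le_div (by positivity)]
    exact pow_le_pow_right₀ one_le_two (hs (Nat.le_mul_of_pos_left p (Nat.pos_of_ne_zero hQ)))

lemma mu_mul_div_eq_one {Q p : ℕ} (hQ : Q ≠ 0) (hp : p ≠ 0) (h : s (Q * p) = s p) :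
    mu (twoPowSeq s) (Q * p) / mu (twoPowSeq s) p = 1 := by
  rw [mu_eq hp, mu_eq (mul_ne_zero hQ hp), h, div_self (by positivity)]

end twoPowSeq

/-- `Nat.sqrt (Nat.log 2 j)` is the index `k` of the block `2^{k²} ≤ j < 2^{(k+1)²}` of `j`. -/
def blockExp (j : ℕ) : ℕ := 4 ^ (Nat.sqrt (Nat.log 2 j) + 2)

lemma two_pow_succ_mul_succ (k : ℕ) : 2 ^ ((k + 1) * (k + 1)) = 2 ^ (k * k) * 4 ^ k * 2 := by
  rw [show (4 : ℕ) = 2 ^ 2 by rfl, ← pow_mul, ← pow_add, ← pow_succ]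
  ring_nf

lemma blockExp_eq {j k : ℕ} (h₁ : 2 ^ (k * k) ≤ j) (h₂ : j < 2 ^ ((k + 1) * (k + 1))) :
    blockExp j = 4 ^ (k + 2) := by
  have hj : j ≠ 0 := (Nat.two_pow_pos _).trans_le h₁ |>.ne'
  rw [blockExp,
    ← Nat.eq_sqrt.2 ⟨Nat.le_log_of_pow_le one_lt_two h₁, Nat.log_lt_of_lt_pow hj h₂⟩]

lemma blockExp_le {j k : ℕ} (hj : j ≠ 0) (h : j < 2 ^ (k * k)) :
    blockExp j ≤ 4 ^ (k + 1) := by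
  have : Nat.sqrt (Nat.log 2 j) < k := Nat.sqrt_lt.2 (Nat.log_lt_of_lt_pow hj h)
  exact Nat.pow_le_pow_right (by norm_num) (by omega)

lemma blockExp_monotone : Monotone blockExp := fun _ _ h =>
  Nat.pow_le_pow_right (by norm_num) (by gcongr)

lemma blockExp_two_pow (k : ℕ) : blockExp (2 ^ (k * k)) = 4 ^ (k + 2) :=
  blockExp_eq le_rfl (Nat.pow_lt_pow_right (by norm_num) (by nlinarith))

lemma exists_le_blockExp (n : ℕ) : ∃ j, n ≤ blockExp j := by
  refine ⟨2 ^ (n * n), ?_⟩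
  rw [blockExp_two_pow]
  calc n ≤ 4 ^ n := (Nat.lt_pow_self (by norm_num)).le
    _ ≤ 4 ^ (n + 2) := Nat.pow_le_pow_right (by norm_num) (by omega)

lemma expSum_blockExp_add_two_mul_le {p : ℕ} (hp : 1 ≤ p) :
    expSum blockExp p + 2 * p ≤ p * blockExp (p + 1) := by
  set k := Nat.sqrt (Nat.log 2 (p + 1))
  set a := 2 ^ (k * k)
  obtain ⟨hlow, hhigh⟩ := Nat.eq_sqrt.1 (rfl : k = _)
  have hap : a ≤ p + 1 := Nat.pow_le_of_le_log (by omega) hlow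
  have hpA : p + 1 < 2 ^ ((k + 1) * (k + 1)) := Nat.lt_pow_of_log_lt one_lt_two hhigh
  have hk : 1 ≤ k := Nat.le_sqrt.2 (Nat.le_log_of_pow_le one_lt_two (by omega))
  have ha : 2 ≤ a := Nat.le_self_pow (Nat.mul_pos hk hk).ne' 2
  have hsp : blockExp (p + 1) = 4 * 4 ^ (k + 1) := by
    rw [blockExp_eq hap hpA, pow_succ' 4 (k + 1)]
  have hsum :
      expSum blockExp p ≤ (a - 1) * 4 ^ (k + 1) + (p - (a - 1)) * blockExp (p + 1) := by
    have h := expSum.add_le blockExp_monotone (a - 1) (p - (a - 1))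
    rw [Nat.add_sub_cancel' (by omega)] at h
    refine h.trans (add_le_add ?_ (Nat.mul_le_mul_left _ (blockExp_monotone p.le_succ)))
    exact (expSum.le_mul blockExp_monotone _).trans
      (Nat.mul_le_mul_left _ (blockExp_le (by omega) (by omega)))
  have h2p : 2 * p ≤ 3 * (a - 1) * 4 ^ (k + 1) := by
    rw [two_pow_succ_mul_succ] at hpA
    change p + 1 < a * 4 ^ k * 2 at hpA
    calc 2 * p ≤ a * 4 ^ (k + 1) := by rw [pow_succ]; linarith
      _ ≤ 3 * (a - 1) * 4 ^ (k + 1) := Nat.mul_le_mul_right _ (by omega)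
  have hsplit : p * blockExp (p + 1) =
      (a - 1) * blockExp (p + 1) + (p - (a - 1)) * blockExp (p + 1) := by
    rw [← add_mul, Nat.add_sub_cancel' (by omega)]
  rw [hsplit, hsp]
  rw [hsp] at hsum
  linarith

lemma expSum_blockExp_doubling (p : ℕ) :
    2 * expSum blockExp p + 2 * p ≤ expSum blockExp (2 * p) := by
  rcases Nat.eq_zero_or_pos p with rfl | hp
  · simp
  · linarith [expSum.add_mul_le_two_mul blockExp_monotone p, expSum_blockExp_add_two_mul_le hp]

lemma expSum_blockExp_two_mul_le {k p : ℕ} (h₁ : 2 ^ (k * k) * 4 ^ k ≤ 2 * p)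
    (h₂ : 2 * p < 2 ^ ((k + 1) * (k + 1))) :
    expSum blockExp (2 * p) ≤ 2 * expSum blockExp p + 2 * 16 * p := by
  set a := 2 ^ (k * k)
  have hk : k ≠ 0 := by rintro rfl; simp [a] at h₁ h₂; omega
  have h4 : 4 ≤ 4 ^ k := Nat.le_self_pow hk 4
  have ha : a ≤ 2 * p := le_of_mul_le_of_one_le_left h₁ (by omega)
  have hs : blockExp (2 * p) = 4 ^ (k + 2) := blockExp_eq ha h₂
  have hsa : blockExp (a - 1 + 1) = blockExp (2 * p) := by
    rw [Nat.sub_add_cancel Nat.one_le_two_pow, hs, blockExp_two_pow]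
  have hm : a - 1 ≤ p := by
    have := Nat.mul_le_mul_left a h4
    omega
  calc expSum blockExp (2 * p) ≤ 2 * expSum blockExp p + (a - 1) * blockExp (2 * p) :=
        expSum.two_mul_le blockExp_monotone hm hsa
    _ ≤ 2 * expSum blockExp p + a * 4 ^ k * 16 := by
        rw [hs, pow_add, mul_assoc]
        gcongr
        · exact Nat.sub_le a 1
        · norm_num
    _ ≤ 2 * expSum blockExp p + 2 * 16 * p := by omega

lemma frequently_expSum_blockExp_two_mul_le :
    ∃ᶠ p in atTop, expSum blockExp (2 * p) ≤ 2 * expSum blockExp p + 2 * 16 * p := by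
  refine frequently_atTop.2 fun N => ⟨2 ^ (N * N + 4 * N + 2), ?_, ?_⟩
  · exact Nat.lt_two_pow_self.le.trans (Nat.pow_le_pow_right (by norm_num) (by nlinarith))
  · refine expSum_blockExp_two_mul_le (k := N + 1) (le_of_eq ?_) ?_
    · rw [show (4 : ℕ) = 2 ^ 2 by rfl, ← pow_mul, ← pow_add, ← pow_succ']
      ring_nf
    · rw [← pow_succ']
      exact Nat.pow_lt_pow_right (by norm_num) (by nlinarith)

lemma frequently_blockExp_mul_eq {Q : ℕ} (hQ : 1 ≤ Q) :
    ∃ᶠ p in atTop, p ≠ 0 ∧ blockExp (Q * p) = blockExp p := by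
  refine frequently_atTop.2 fun N => ?_
  set k := max N Q
  refine ⟨2 ^ (k * k), ?_, by positivity, ?_⟩
  · exact (le_max_left N Q).trans ((Nat.le_mul_self k).trans Nat.lt_two_pow_self.le)
  · rw [blockExp_two_pow]
    refine blockExp_eq (Nat.le_mul_of_pos_left _ hQ) ?_
    rw [two_pow_succ_mul_succ, mul_comm Q, mul_assoc]
    refine Nat.mul_lt_mul_of_pos_left ?_ (by positivity)
    calc Q ≤ k := le_max_right N Q
      _ < 2 ^ k := Nat.lt_two_pow_self
      _ ≤ 4 ^ k := Nat.pow_le_pow_left (by norm_num) k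
      _ < 4 ^ k * 2 := lt_mul_of_one_lt_right (by positivity) one_lt_two

/-- Example 3.5: a sequence `M ∈ LC` whose associated weight has `(ω1)` while
`(β3)` fails. -/
theorem stmt8 : ∃ M : ℕ → ℝ, IsLC M ∧
    (2 : ℝ) ≤ Filter.liminf
      (fun p : ℕ => (M (2 * p)) ^ (1 / (2 * (p : ℝ))) / (M p) ^ (1 / (p : ℝ)))
      Filter.atTop ∧
    Omega1 (omegaM M) ∧
    (∀ Q : ℕ, 2 ≤ Q →
      Filter.liminf (fun p : ℕ => mu M (Q * p) / mu M p) Filter.atTop = 1) := by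
  have hLC := twoPowSeq.isLC blockExp_monotone exists_le_blockExp
  have hdouble (p : ℕ) :
      (2 : ℝ) ^ (2 * p) * twoPowSeq blockExp p ^ 2 ≤ twoPowSeq blockExp (2 * p) := by
    simpa using twoPowSeq.pow_mul_sq_le (c := 1) (by simpa using expSum_blockExp_doubling p)
  refine ⟨twoPowSeq blockExp, hLC, ?_, ?_, fun Q hQ => ?_⟩
  · exact le_liminf_rootRatio twoPowSeq.pos zero_le_two (by positivity) hdouble
      (frequently_expSum_blockExp_two_mul_le.mono fun p => twoPowSeq.le_pow_mul_sq)
  · exact omega1_omegaM twoPowSeq.pos hLC.2.2.2.2 hdouble hLC.2.1 twoPowSeq.monotone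
  · exact liminf_eq_of_frequently_eq
      (Eventually.of_forall (twoPowSeq.one_le_mu_mul_div blockExp_monotone (by omega)))
      ((frequently_blockExp_mul_eq (by omega)).mono fun p ⟨hp, h⟩ =>
        twoPowSeq.mu_mul_div_eq_one (by omega) hp h)
end

section
/- Let M : ℕ → ℝ be a weight sequence in the class LC, with m_p := M_p/p!. Then the following are equivalent: (i) there exist A ≥ 1 and a positive integer C such that (m_p)^{1/p} ≤ A·(m_q)^{1/q} for all p ≥ 1 and all q ≥ C·p; (ii) there exist B ≥ 1 and a positive integer C such that (m_p)^{1/p} ≤ B·(l^C_q)^{1/q} for all 1 ≤ p ≤ q, where l^C_p := (M_{C·p})^{1/C}/p!. -/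
open Filter Real Asymptotics

/-!
Both conditions compare `m_p^{1/p}` with `M_n^{1/n} / (k!)^{1/k}` for indices `n`, `k` of
comparable size, and `k/e ≤ (k!)^{1/k} ≤ k` makes the factorial roots interchangeable up to a
constant factor. Since `(l^C_q)^{1/q} = M_{Cq}^{1/(Cq)} / (q!)^{1/q}`, (i) at `(p, Cq)` gives (ii)
at `(p, q)`. Conversely, for `q ≥ Cp` put `r = ⌊q/C⌋`, so that `p ≤ r` and `Cr ≤ q ≤ 2Cr`;
log-convexity with `M_0 = 1` makes `p ↦ M_p^{1/p}` increasing, so (ii) at `(p, r)` gives (i)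
at `(p, q)`.
-/

open Nat

theorem rpow_one_div_le_rpow_one_div_of_pow_le {a b : ℝ} (ha : 0 ≤ a) (hb : 0 ≤ b) {p q : ℕ}
    (hp : p ≠ 0) (hq : q ≠ 0) (h : a ^ q ≤ b ^ p) :
    a ^ (1 / (p : ℝ)) ≤ b ^ (1 / (q : ℝ)) := by
  have hp' : (p : ℝ) ≠ 0 := by exact_mod_cast hp
  have hq' : (q : ℝ) ≠ 0 := by exact_mod_cast hq
  calc a ^ (1 / (p : ℝ)) = (a ^ q) ^ (1 / ((p : ℝ) * q)) := by
        rw [← Real.rpow_natCast, ← Real.rpow_mul ha]; field_simp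
    _ ≤ (b ^ p) ^ (1 / ((p : ℝ) * q)) := by gcongr
    _ = b ^ (1 / (q : ℝ)) := by
        rw [← Real.rpow_natCast, ← Real.rpow_mul hb]; field_simp

theorem factorial_rpow_one_div_le_self {n : ℕ} (hn : n ≠ 0) :
    (n ! : ℝ) ^ (1 / (n : ℝ)) ≤ n := by
  rw [one_div, Real.rpow_inv_le_iff_of_pos (by positivity) (by positivity) (by positivity),
    Real.rpow_natCast]
  exact_mod_cast Nat.factorial_le_pow n

theorem self_div_exp_one_le_factorial_rpow_one_div {n : ℕ} (hn : n ≠ 0) :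
    n / exp 1 ≤ (n ! : ℝ) ^ (1 / (n : ℝ)) := by
  rw [one_div, Real.le_rpow_inv_iff_of_pos (by positivity) (by positivity) (by positivity),
    Real.rpow_natCast, div_pow, ← Real.exp_nat_mul, mul_one, div_le_iff₀ (by positivity)]
  have := Real.pow_div_factorial_le_exp (x := (n : ℝ)) (Nat.cast_nonneg n) n
  rwa [div_le_iff₀ (by positivity), mul_comm] at this

theorem factorial_rpow_one_div_le_mul {a b : ℕ} {K : ℝ} (ha : a ≠ 0) (hb : b ≠ 0)
    (hba : (b : ℝ) ≤ K * a) :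
    (b ! : ℝ) ^ (1 / (b : ℝ)) ≤ K * exp 1 * (a ! : ℝ) ^ (1 / (a : ℝ)) := by
  have hK : 0 < K := pos_of_mul_pos_left ((by positivity : (0 : ℝ) < b).trans_le hba)
    (Nat.cast_nonneg a)
  calc (b ! : ℝ) ^ (1 / (b : ℝ)) ≤ b := factorial_rpow_one_div_le_self hb
    _ ≤ K * a := hba
    _ = K * exp 1 * (a / exp 1) := by field_simp
    _ ≤ K * exp 1 * (a ! : ℝ) ^ (1 / (a : ℝ)) := by
        gcongr; exact self_div_exp_one_le_factorial_rpow_one_div ha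

theorem div_factorial_rpow_one_div_le_mul {a b : ℕ} {K x y : ℝ} (ha : a ≠ 0) (hb : b ≠ 0)
    (hba : (b : ℝ) ≤ K * a) (hx : 0 ≤ x) (hxy : x ≤ y) :
    x / (a ! : ℝ) ^ (1 / (a : ℝ)) ≤ K * exp 1 * (y / (b ! : ℝ) ^ (1 / (b : ℝ))) := by
  rw [← mul_div_assoc, div_le_div_iff₀ (by positivity) (by positivity)]
  calc x * (b ! : ℝ) ^ (1 / (b : ℝ)) ≤ y * (K * exp 1 * (a ! : ℝ) ^ (1 / (a : ℝ))) :=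
        mul_le_mul hxy (factorial_rpow_one_div_le_mul ha hb hba) (by positivity)
          (hx.trans hxy)
    _ = K * exp 1 * y * (a ! : ℝ) ^ (1 / (a : ℝ)) := by ring

theorem le_two_mul_mul_div {C q : ℕ} (hC : 0 < C) (hCq : C ≤ q) : q ≤ 2 * C * (q / C) := by
  have hlt := Nat.lt_mul_div_succ q hC
  have hle : C ≤ C * (q / C) := Nat.le_mul_of_pos_right C ((Nat.one_le_div_iff hC).2 hCq)
  linarith

noncomputable def lseq (M : ℕ → ℝ) (C q : ℕ) : ℝ :=
  M (C * q) ^ (1 / (C : ℝ)) / (q ! : ℝ)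

section RootQuotients

variable {M : ℕ → ℝ}

theorem mseq_rpow_one_div {q : ℕ} (hM : 0 ≤ M q) :
    mseq M q ^ (1 / (q : ℝ)) = M q ^ (1 / (q : ℝ)) / (q ! : ℝ) ^ (1 / (q : ℝ)) :=
  Real.div_rpow hM (by positivity) _

theorem lseq_rpow_one_div {C q : ℕ} (hM : 0 ≤ M (C * q)) :
    lseq M C q ^ (1 / (q : ℝ)) =
      M (C * q) ^ (1 / ((C * q : ℕ) : ℝ)) / (q ! : ℝ) ^ (1 / (q : ℝ)) := by
  rw [lseq, Real.div_rpow (by positivity) (by positivity), ← Real.rpow_mul hM]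
  congr 2
  push_cast
  ring

theorem mseq_rpow_one_div_le_exp_one_mul_lseq {C q : ℕ} (hC : C ≠ 0) (hq : q ≠ 0)
    (hM : 0 ≤ M (C * q)) :
    mseq M (C * q) ^ (1 / ((C * q : ℕ) : ℝ)) ≤ exp 1 * lseq M C q ^ (1 / (q : ℝ)) := by
  rw [mseq_rpow_one_div hM, lseq_rpow_one_div hM, ← one_mul (exp 1)]
  refine div_factorial_rpow_one_div_le_mul (mul_ne_zero hC hq) hq ?_ (by positivity) le_rfl
  rw [one_mul]
  exact_mod_cast Nat.le_mul_of_pos_left q (Nat.pos_of_ne_zero hC)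

end RootQuotients

section LogConvex

variable {M : ℕ → ℝ} (hpos : ∀ p, 0 < M p) (h0 : M 0 ≤ 1)
  (hlc : ∀ p : ℕ, 1 ≤ p → M p ^ 2 ≤ M (p - 1) * M (p + 1))
include hpos h0 hlc

theorem pow_succ_le_pow_of_logConvex (p : ℕ) : M p ^ (p + 1) ≤ M (p + 1) ^ p := by
  induction p with
  | zero => simpa using h0
  | succ n ih =>
    have hc : M (n + 1) ^ 2 ≤ M n * M (n + 2) := hlc (n + 1) (by omega)
    refine le_of_mul_le_mul_left ?_ (pow_pos (hpos (n + 1)) n)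
    calc M (n + 1) ^ n * M (n + 1) ^ (n + 2) = (M (n + 1) ^ 2) ^ (n + 1) := by ring
      _ ≤ (M n * M (n + 2)) ^ (n + 1) := by gcongr
      _ = M n ^ (n + 1) * M (n + 2) ^ (n + 1) := mul_pow _ _ _
      _ ≤ M (n + 1) ^ n * M (n + 2) ^ (n + 1) :=
        mul_le_mul_of_nonneg_right ih (pow_nonneg (hpos _).le _)

theorem monotoneOn_rpow_one_div_of_logConvex :
    MonotoneOn (fun p : ℕ => M p ^ (1 / (p : ℝ))) (Set.Ici 1) :=
  monotoneOn_nat_Ici_of_le_succ fun p hp =>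
    rpow_one_div_le_rpow_one_div_of_pow_le (hpos p).le (hpos (p + 1)).le (by omega) (by omega)
      (pow_succ_le_pow_of_logConvex hpos h0 hlc p)

theorem lseq_rpow_one_div_le_mul_mseq {C r q : ℕ} (hC : C ≠ 0)
    (hr : r ≠ 0) (hCr : C * r ≤ q) (hq : q ≤ 2 * C * r) :
    lseq M C r ^ (1 / (r : ℝ)) ≤ 2 * C * exp 1 * mseq M q ^ (1 / (q : ℝ)) := by
  have hCr1 : 1 ≤ C * r := Nat.one_le_iff_ne_zero.2 (mul_ne_zero hC hr)
  rw [lseq_rpow_one_div (hpos _).le, mseq_rpow_one_div (hpos _).le]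
  refine div_factorial_rpow_one_div_le_mul hr (by omega) (by exact_mod_cast hq)
    (Real.rpow_nonneg (hpos _).le _) ?_
  exact monotoneOn_rpow_one_div_of_logConvex hpos h0 hlc hCr1 (hCr1.trans hCr) hCr

end LogConvex

/-- Lemma 4.3: the truncated condition for `m` is equivalent to the mixed
root-almost-increasing condition between `m` and `l^C`. -/
theorem stmt12 (M : ℕ → ℝ) (hM : IsLC M) :
    (∃ A : ℝ, 1 ≤ A ∧ ∃ C : ℕ, 1 ≤ C ∧ ∀ p q : ℕ, 1 ≤ p → C * p ≤ q →
      (mseq M p) ^ (1 / (p : ℝ)) ≤ A * (mseq M q) ^ (1 / (q : ℝ))) ↔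
    (∃ B : ℝ, 1 ≤ B ∧ ∃ C : ℕ, 1 ≤ C ∧ ∀ p q : ℕ, 1 ≤ p → p ≤ q →
      (mseq M p) ^ (1 / (p : ℝ)) ≤
        B * ((M (C * q)) ^ (1 / (C : ℝ)) / (Nat.factorial q)) ^ (1 / (q : ℝ))) := by
  obtain ⟨hpos, h0, -, hlc, -⟩ := hM
  have he : 1 ≤ exp 1 := Real.one_le_exp zero_le_one
  constructor
  · rintro ⟨A, hA, C, hC, h⟩
    refine ⟨A * exp 1, one_le_mul_of_one_le_of_one_le hA he, C, hC, fun p q hp hpq => ?_⟩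
    calc mseq M p ^ (1 / (p : ℝ)) ≤ A * mseq M (C * q) ^ (1 / ((C * q : ℕ) : ℝ)) :=
          h p (C * q) hp (Nat.mul_le_mul_left C hpq)
      _ ≤ A * (exp 1 * lseq M C q ^ (1 / (q : ℝ))) := by
          gcongr
          exact mseq_rpow_one_div_le_exp_one_mul_lseq (by omega) (by omega) (hpos _).le
      _ = A * exp 1 * lseq M C q ^ (1 / (q : ℝ)) := by ring
  · rintro ⟨B, hB, C, hC, h⟩
    have h2C : (1 : ℝ) ≤ 2 * C := by norm_cast; omega
    refine ⟨B * (2 * C * exp 1), one_le_mul_of_one_le_of_one_le hB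
      (one_le_mul_of_one_le_of_one_le h2C he), C, hC, fun p q hp hpq => ?_⟩
    have hpr : p ≤ q / C := (Nat.le_div_iff_mul_le hC).2 (by linarith)
    calc mseq M p ^ (1 / (p : ℝ)) ≤ B * lseq M C (q / C) ^ (1 / ((q / C : ℕ) : ℝ)) :=
          h p (q / C) hp hpr
      _ ≤ B * (2 * C * exp 1 * mseq M q ^ (1 / (q : ℝ))) := by
          gcongr
          exact lseq_rpow_one_div_le_mul_mseq hpos h0.le hlc (by omega) (by omega)
            (Nat.mul_div_le q C) (le_two_mul_mul_div hC (by nlinarith))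
      _ = B * (2 * C * exp 1) * mseq M q ^ (1 / (q : ℝ)) := by ring
end

section
/- Let M : ℕ → ℝ be a weight sequence in the class LC satisfying moderate growth (mg), with m_p := M_p/p!. Then the following are equivalent: (i) there exist A ≥ 1 and a positive integer C such that (m_p)^{1/p} ≤ A·(m_q)^{1/q} for all p ≥ 1 and all q ≥ C·p; (ii) M is root almost increasing, i.e. there exists A ≥ 1 such that (m_p)^{1/p} ≤ A·(m_q)^{1/q} for all 1 ≤ p ≤ q; (iii) the weight matrix M_{ω_M} associated with ω_M satisfies (M_{rai}). -/
open Filter Real Asymptotics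

/-
By log-convexity, the tangent to `p ↦ log M_p` at `p` with slope `log μ_{p+1}` lies below the
whole sequence, so `ω_M(μ_{p+1}) = p log μ_{p+1} - log M_p` and hence `M_p ≤ M^{(1)}_p`.
Conversely, (mg) iterates to `M_{np} ≤ C^{n²p} M_p^n`, and comparing `ω_M(eᵗ)` with the term of
index `n p` gives `M^{(x)}_p ≤ C^{np} M_p` whenever `x ≤ n`. So every sequence of the weight
matrix agrees with `M` up to a geometric factor, which is invisible in `(m_p)^{1/p}` up to a
constant: (ii) and (M_rai) are equivalent. For (i) ⇒ (ii), (mg) for `m` gives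
`(m_{kq})^{1/(kq)} ≤ C^k (m_q)^{1/q}`, so comparing `p ≤ q` reduces to comparing `p` with `C q`.
-/

lemma tangent_le_of_monotone_sub {ℓ : ℕ → ℝ} (hℓ : Monotone fun j => ℓ (j + 1) - ℓ j) (p j : ℕ) :
    ℓ p + ((j : ℝ) - p) * (ℓ (p + 1) - ℓ p) ≤ ℓ j := by
  set s := ℓ (p + 1) - ℓ p
  suffices ℓ p - p * s ≤ ℓ j - j * s by linarith
  have hsucc (n : ℕ) : ℓ (n + 1) - (n + 1 : ℕ) * s - (ℓ n - n * s) = (ℓ (n + 1) - ℓ n) - s := by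
    push_cast; ring
  rcases le_total p j with hpj | hjp
  · refine Nat.rel_of_forall_rel_succ_of_le_of_le (· ≤ ·) (f := fun n => ℓ n - n * s)
      (fun n hn => ?_) le_rfl hpj
    linarith [hsucc n, hℓ hn]
  · exact Nat.decreasingInduction (motive := fun m _ => ℓ p - p * s ≤ ℓ m - m * s)
      (fun k hk ih => by linarith [hsucc k, hℓ hk.le]) le_rfl hjp

lemma pow_le_of_mg {a : ℕ → ℝ} {C : ℝ} (hC : 1 ≤ C) (ha : ∀ p, 0 ≤ a p)
    (hmg : ∀ p q, a (p + q) ≤ C ^ (p + q) * a p * a q) (q : ℕ) {k : ℕ} (hk : k ≠ 0) :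
    a (k * q) ≤ C ^ (k ^ 2 * q) * a q ^ k := by
  induction k with
  | zero => contradiction
  | succ k ih =>
    rcases eq_or_ne k 0 with rfl | hk0
    · simpa using le_mul_of_one_le_left (ha q) (one_le_pow₀ hC)
    calc a ((k + 1) * q) = a (k * q + q) := by ring_nf
      _ ≤ C ^ (k * q + q) * a (k * q) * a q := hmg _ _
      _ ≤ C ^ (k * q + q) * (C ^ (k ^ 2 * q) * a q ^ k) * a q := by
          gcongr
          · exact ha q
          · exact ih hk0
      _ = C ^ (k * q + q + k ^ 2 * q) * a q ^ (k + 1) := by ring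
      _ ≤ C ^ ((k + 1) ^ 2 * q) * a q ^ (k + 1) := by
          refine mul_le_mul_of_nonneg_right (pow_le_pow_right₀ hC ?_) (pow_nonneg (ha q) _)
          ring_nf; omega

lemma rpow_le_of_mg {a : ℕ → ℝ} {C : ℝ} (hC : 1 ≤ C) (ha : ∀ p, 0 ≤ a p)
    (hmg : ∀ p q, a (p + q) ≤ C ^ (p + q) * a p * a q) {k q : ℕ} (hk : k ≠ 0) (hq : q ≠ 0) :
    a (k * q) ^ (1 / ((k * q : ℕ) : ℝ)) ≤ C ^ k * a q ^ (1 / (q : ℝ)) := by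
  have hC0 : 0 ≤ C := by linarith
  calc a (k * q) ^ (1 / ((k * q : ℕ) : ℝ))
      ≤ (C ^ (k ^ 2 * q) * a q ^ k) ^ (1 / ((k * q : ℕ) : ℝ)) := by
        gcongr
        · exact ha _
        · exact pow_le_of_mg hC ha hmg q hk
    _ = C ^ k * a q ^ (1 / (q : ℝ)) := by
        rw [mul_rpow (by positivity) (pow_nonneg (ha q) k), ← rpow_natCast, ← rpow_natCast (a q),
          ← rpow_mul hC0, ← rpow_mul (ha q), ← rpow_natCast C k]
        congr 2 <;> push_cast <;> field_simp

lemma rpow_le_mul_rpow_of_le_pow_mul {a b E : ℝ} (ha : 0 ≤ a) (hb : 0 ≤ b) (hE : 0 ≤ E) {p : ℕ}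
    (hp : p ≠ 0) (hab : a ≤ E ^ p * b) : a ^ (1 / (p : ℝ)) ≤ E * b ^ (1 / (p : ℝ)) := by
  calc a ^ (1 / (p : ℝ)) ≤ (E ^ p * b) ^ (1 / (p : ℝ)) := by gcongr
    _ = E * b ^ (1 / (p : ℝ)) := by
        rw [mul_rpow (by positivity) hb, one_div, pow_rpow_inv_natCast hE hp]

def RootAlmostIncreasing (m : ℕ → ℝ) : Prop :=
  ∃ A : ℝ, 1 ≤ A ∧ ∀ p q : ℕ, 1 ≤ p → p ≤ q → m p ^ (1 / (p : ℝ)) ≤ A * m q ^ (1 / (q : ℝ))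

lemma rootAlmostIncreasing_of_hasMG {m : ℕ → ℝ} (hm : ∀ p, 0 ≤ m p) (hmg : HasMG m)
    (h : ∃ A : ℝ, 1 ≤ A ∧ ∃ C : ℕ, 1 ≤ C ∧ ∀ p q : ℕ, 1 ≤ p → C * p ≤ q →
      m p ^ (1 / (p : ℝ)) ≤ A * m q ^ (1 / (q : ℝ))) :
    RootAlmostIncreasing m := by
  obtain ⟨B, hB, hmgB⟩ := hmg
  obtain ⟨A, hA, C, hC, h⟩ := h
  refine ⟨A * B ^ C, one_le_mul_of_one_le_of_one_le hA (one_le_pow₀ hB), fun p q hp hpq => ?_⟩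
  calc m p ^ (1 / (p : ℝ)) ≤ A * m (C * q) ^ (1 / ((C * q : ℕ) : ℝ)) :=
        h p (C * q) hp (Nat.mul_le_mul_left C hpq)
    _ ≤ A * (B ^ C * m q ^ (1 / (q : ℝ))) := by
        gcongr
        exact rpow_le_of_mg hB hm hmgB (by omega) (by omega)
    _ = A * B ^ C * m q ^ (1 / (q : ℝ)) := by ring

section

variable {M : ℕ → ℝ}

lemma mseq_pos (hM : ∀ p, 0 < M p) (p : ℕ) : 0 < mseq M p :=
  div_pos (hM p) (by positivity)

lemma hasMG_mseq (hM : ∀ p, 0 < M p) : HasMG M → HasMG (mseq M) := by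
  rintro ⟨C, hC, hmg⟩
  refine ⟨C, hC, fun p q => ?_⟩
  have hfac : ((p.factorial : ℕ) : ℝ) * q.factorial ≤ (p + q).factorial := by
    exact_mod_cast Nat.le_of_dvd (Nat.factorial_pos _)
      (Nat.factorial_mul_factorial_dvd_factorial_add p q)
  have hMp := hM p
  have hMq := hM q
  calc mseq M (p + q) ≤ C ^ (p + q) * M p * M q / ((p + q).factorial : ℝ) := by
        unfold mseq; gcongr; exact hmg p q
    _ ≤ C ^ (p + q) * M p * M q / ((p.factorial : ℝ) * q.factorial) := by
        gcongr
    _ = C ^ (p + q) * mseq M p * mseq M q := by unfold mseq; ring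

lemma omegaM_exp (hM : ∀ p, 0 < M p) (x : ℝ) :
    omegaM M (exp x) = ⨆ p : ℕ, (p * x - log (M p)) := by
  rw [omegaM, if_neg (exp_ne_zero x)]
  congr 1 with p
  rw [log_div (pow_ne_zero _ (exp_ne_zero x)) (hM p).ne', log_pow, log_exp]

lemma bddAbove_range_mul_sub_log (hM : IsLC M) (x : ℝ) :
    BddAbove (Set.range fun p : ℕ => p * x - log (M p)) := by
  refine (isBoundedUnder_of_eventually_le (a := 0) ?_).bddAbove_range
  filter_upwards [tendsto_atTop.mp hM.2.2.2.2 (exp x), eventually_gt_atTop 0] with p hp hp0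
  have hp0' : (0 : ℝ) < p := by exact_mod_cast hp0
  have := log_le_log (exp_pos x) hp
  rw [log_exp, log_rpow (hM.1 p), one_div, inv_mul_eq_div, le_div_iff₀ hp0'] at this
  linarith

lemma mul_sub_log_le_omegaM (hM : IsLC M) (x : ℝ) (p : ℕ) :
    p * x - log (M p) ≤ omegaM M (exp x) := by
  rw [omegaM_exp hM.1]
  exact le_ciSup (bddAbove_range_mul_sub_log hM x) p

lemma omegaM_exp_le (hM : ∀ p, 0 < M p) {x c : ℝ} (h : ∀ p : ℕ, p * x - log (M p) ≤ c) :
    omegaM M (exp x) ≤ c := by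
  rw [omegaM_exp hM]
  exact ciSup_le h

lemma omegaM_exp_nonneg (hM : IsLC M) (x : ℝ) : 0 ≤ omegaM M (exp x) := by
  simpa [hM.2.1] using mul_sub_log_le_omegaM hM x 0

lemma phiStar_le {y c : ℝ} (h : ∀ x, 0 ≤ x → x * y - omegaM M (exp x) ≤ c) : phiStar M y ≤ c :=
  csSup_le ⟨_, 0, Set.self_mem_Ici, rfl⟩ (by rintro _ ⟨x, hx, rfl⟩; exact h x hx)

lemma le_phiStar (hM : IsLC M) {x : ℝ} (hx : 0 ≤ x) (y : ℝ) :
    x * y - omegaM M (exp x) ≤ phiStar M y := by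
  refine le_csSup ⟨log (M ⌈y⌉₊), ?_⟩ ⟨x, hx, rfl⟩
  rintro _ ⟨t, ht, rfl⟩
  have := mul_sub_log_le_omegaM hM t ⌈y⌉₊
  have : t * y ≤ t * ⌈y⌉₊ := mul_le_mul_of_nonneg_left (Nat.le_ceil y) ht
  linarith

lemma monotone_log_sub (hM : IsLC M) : Monotone fun p => log (M (p + 1)) - log (M p) := by
  refine monotone_nat_of_le_succ fun p => ?_
  have h := hM.2.2.2.1 (p + 1) (by omega)
  simp only [Nat.add_sub_cancel] at h
  have := log_le_log (by have := hM.1 (p + 1); positivity) h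
  rw [log_pow, log_mul (hM.1 p).ne' (hM.1 _).ne'] at this
  push_cast at this
  linarith

lemma log_le_phiStar (hM : IsLC M) (p : ℕ) : log (M p) ≤ phiStar M p := by
  set x := log (M (p + 1)) - log (M p)
  have hx : 0 ≤ x := by
    have h01 : log (M 0) ≤ log (M 1) := log_le_log (hM.1 0) hM.2.2.1
    have := monotone_log_sub hM (Nat.zero_le p)
    simp only [Nat.zero_add] at this
    linarith
  -- The tangent to `log ∘ M` at `p` with slope `x = log μ_{p+1}` shows that `ω_M(eˣ)` is
  -- attained at the index `p`.
  have hω : omegaM M (exp x) ≤ p * x - log (M p) :=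
    omegaM_exp_le hM.1 fun j => by
      linarith [tangent_le_of_monotone_sub (ℓ := fun j => log (M j)) (monotone_log_sub hM) p j]
  linarith [le_phiStar hM hx p]

lemma phiStar_mul_le (hM : IsLC M) {C : ℝ} (hC : 1 ≤ C)
    (hmg : ∀ p q, M (p + q) ≤ C ^ (p + q) * M p * M q) {x : ℝ} (hx : 0 ≤ x) {n : ℕ} (hn : n ≠ 0)
    (hxn : x ≤ n) (p : ℕ) :
    phiStar M (x * p) ≤ x * (log (M p) + n * p * log C) := by
  refine phiStar_le fun t _ => ?_
  have hiter : log (M (n * p)) ≤ n ^ 2 * p * log C + n * log (M p) := by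
    have hMp := hM.1 p
    have := log_le_log (hM.1 _) (pow_le_of_mg hC (fun p => (hM.1 p).le) hmg p hn)
    rw [log_mul (by positivity) (by positivity), log_pow, log_pow] at this
    push_cast at this
    linarith
  have hω : (n * p : ℕ) * t - log (M (n * p)) ≤ omegaM M (exp t) := mul_sub_log_le_omegaM hM t _
  push_cast at hω
  -- `ω_M(eᵗ) ≥ n·B` by the index `n p` and `ω_M ≥ 0`, so `ω_M(eᵗ) ≥ x·B` whatever the sign of `B`.
  have hB : x * (p * t - log (M p) - n * p * log C) ≤ omegaM M (exp t) := by
    rcases le_total 0 (p * t - log (M p) - n * p * log C) with hB | hB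
    · calc x * (p * t - log (M p) - n * p * log C)
          ≤ n * (p * t - log (M p) - n * p * log C) := mul_le_mul_of_nonneg_right hxn hB
        _ ≤ omegaM M (exp t) := by linarith
    · exact (mul_nonpos_of_nonneg_of_nonpos hx hB).trans (omegaM_exp_nonneg hM t)
  linarith

lemma mMat_le (hM : IsLC M) {C : ℝ} (hC : 1 ≤ C)
    (hmg : ∀ p q, M (p + q) ≤ C ^ (p + q) * M p * M q) {x : ℝ} (hx : 0 < x) {n : ℕ} (hn : n ≠ 0)
    (hxn : x ≤ n) (p : ℕ) :
    mMat M x p ≤ (C ^ n) ^ p * mseq M p := by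
  unfold mMat mseq MMat
  rw [← mul_div_assoc]
  gcongr
  calc exp (1 / x * phiStar M (x * p)) ≤ exp (log (M p) + n * p * log C) := by
        gcongr
        rw [one_div, inv_mul_le_iff₀ hx]
        exact phiStar_mul_le hM hC hmg hx.le hn hxn p
    _ = (C ^ n) ^ p * M p := by
        rw [exp_add, exp_log (hM.1 p), ← pow_mul, ← rpow_natCast, rpow_def_of_pos (by linarith)]
        push_cast
        ring_nf

lemma exists_rpow_mMat_le (hM : IsLC M) (hmg : HasMG M) {x : ℝ} (hx : 0 < x) :
    ∃ E, 0 < E ∧ ∀ p : ℕ, p ≠ 0 → mMat M x p ^ (1 / (p : ℝ)) ≤ E * mseq M p ^ (1 / (p : ℝ)) := by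
  obtain ⟨C, hC, hmgC⟩ := hmg
  refine ⟨C ^ ⌈x⌉₊, by positivity, fun p hp => ?_⟩
  exact rpow_le_mul_rpow_of_le_pow_mul (by unfold mMat MMat; positivity) (mseq_pos hM.1 p).le
    (by positivity) hp (mMat_le hM hC hmgC hx (Nat.ceil_pos.mpr hx).ne' (Nat.le_ceil x) p)

lemma mseq_le_mMat_one (hM : IsLC M) (p : ℕ) : mseq M p ≤ mMat M 1 p := by
  unfold mseq mMat MMat
  gcongr
  calc M p = exp (log (M p)) := (exp_log (hM.1 p)).symm
    _ ≤ exp (1 / 1 * phiStar M (1 * p)) := by simpa using log_le_phiStar hM p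

lemma mRai_of_rootAlmostIncreasing (hM : IsLC M) (hmg : HasMG M)
    (h : RootAlmostIncreasing (mseq M)) : MRai M := by
  obtain ⟨A, hA, h⟩ := h
  intro x hx
  obtain ⟨E, hE, hxE⟩ := exists_rpow_mMat_le hM hmg hx
  refine ⟨E * A, by positivity, 1, one_pos, fun p q hp hpq => ?_⟩
  calc mMat M x p ^ (1 / (p : ℝ)) ≤ E * mseq M p ^ (1 / (p : ℝ)) := hxE p (by omega)
    _ ≤ E * (A * mseq M q ^ (1 / (q : ℝ))) := by gcongr; exact h p q hp hpq
    _ ≤ E * (A * mMat M 1 q ^ (1 / (q : ℝ))) := by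
        gcongr
        · exact (mseq_pos hM.1 q).le
        · exact mseq_le_mMat_one hM q
    _ = E * A * mMat M 1 q ^ (1 / (q : ℝ)) := by ring

lemma rootAlmostIncreasing_of_mRai (hM : IsLC M) (hmg : HasMG M) (h : MRai M) :
    RootAlmostIncreasing (mseq M) := by
  obtain ⟨C, hC, y, hy, h⟩ := h 1 one_pos
  obtain ⟨E, hE, hyE⟩ := exists_rpow_mMat_le hM hmg hy
  refine ⟨max 1 (C * E), le_max_left _ _, fun p q hp hpq => ?_⟩
  calc mseq M p ^ (1 / (p : ℝ)) ≤ mMat M 1 p ^ (1 / (p : ℝ)) := by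
        gcongr
        · exact (mseq_pos hM.1 p).le
        · exact mseq_le_mMat_one hM p
    _ ≤ C * mMat M y q ^ (1 / (q : ℝ)) := h p q hp hpq
    _ ≤ C * (E * mseq M q ^ (1 / (q : ℝ))) := by gcongr; exact hyE q (by omega)
    _ = C * E * mseq M q ^ (1 / (q : ℝ)) := by ring
    _ ≤ max 1 (C * E) * mseq M q ^ (1 / (q : ℝ)) := by
        gcongr
        · exact rpow_nonneg (mseq_pos hM.1 q).le _
        · exact le_max_right 1 (C * E)

end

/-- Corollary 4.4: under `(mg)` the truncated condition, root almost increasing,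
and `(M_{rai})` are equivalent. -/
theorem stmt13 (M : ℕ → ℝ) (hM : IsLC M) (hmg : HasMG M) :
    List.TFAE [
      ∃ A : ℝ, 1 ≤ A ∧ ∃ C : ℕ, 1 ≤ C ∧ ∀ p q : ℕ, 1 ≤ p → C * p ≤ q →
        (mseq M p) ^ (1 / (p : ℝ)) ≤ A * (mseq M q) ^ (1 / (q : ℝ)),
      ∃ A : ℝ, 1 ≤ A ∧ ∀ p q : ℕ, 1 ≤ p → p ≤ q →
        (mseq M p) ^ (1 / (p : ℝ)) ≤ A * (mseq M q) ^ (1 / (q : ℝ)),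
      MRai M] := by
  tfae_have 1 → 2 :=
    rootAlmostIncreasing_of_hasMG (fun p => (mseq_pos hM.1 p).le) (hasMG_mseq hM.1 hmg)
  tfae_have 2 → 1 := fun ⟨A, hA, h⟩ =>
    ⟨A, hA, 1, le_rfl, fun p q hp hpq => h p q hp (by omega)⟩
  tfae_have 2 → 3 := mRai_of_rootAlmostIncreasing hM hmg
  tfae_have 3 → 2 := rootAlmostIncreasing_of_mRai hM hmg
  tfae_finish
end
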